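/- arXiv:1510.01618 — 3 statements merged into one kernel-verified Lean document; each statement's English description precedes it below -/
import Mathlib

section
/- For a, b > 0, λ ∈ ℝ and z > 0, the derivative of z ↦ z^{b-1} E_{a,b}(λ z^a) equals z^{b-2} E_{a,b-1}(λ z^a), provided b > 1 so that E_{a,b-1} is defined. -/
noncomputable def mittagLeffler (a b z : ℝ) : ℝ :=
  ∑' k : ℕ, z ^ k / Real.Gamma (k * a + b)

/-!
For `x > 0` the function is the generalized power series `∑ λᵏ x^(ka + b - 1) / Γ(ka + b)`,
and since `s / Γ(s + 1) = 1 / Γ(s)`, differentiating term by term lowers `b` by one in every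
term. Term-by-term differentiation is justified on `(z/2, 2z)` by the majorant
`((z/2)^(b-2) + (2z)^(b-2)) (|λ| (2z)^a)ᵏ / |Γ(ka + b - 1)|`, which is summable by the
ratio test: log-convexity of `Γ` gives `Γ(x + a) ≥ Γ(x) (x - 1)^a`, so consecutive ratios
tend to `0`.
-/

open Set Filter Real

namespace Real

/-- This also holds at the poles, where `Gamma` takes the junk value `0`. -/
theorem inv_Gamma_eq_mul_inv_Gamma_add_one (s : ℝ) :
    (Gamma s)⁻¹ = s * (Gamma (s + 1))⁻¹ := by
  rcases eq_or_ne s 0 with rfl | hs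
  · simp [Gamma_zero]
  · rw [Gamma_add_one hs, mul_inv, mul_inv_cancel_left₀ hs]

theorem hasDerivAt_rpow_sub_one_div_Gamma (s : ℝ) {x : ℝ} (hx : x ≠ 0) :
    HasDerivAt (fun y => y ^ (s - 1) / Gamma s) (x ^ (s - 1 - 1) / Gamma (s - 1)) x := by
  refine ((hasDerivAt_rpow_const (p := s - 1) (Or.inl hx)).div_const (Gamma s)).congr_deriv ?_
  simp only [div_eq_mul_inv]
  rw [inv_Gamma_eq_mul_inv_Gamma_add_one (s - 1), sub_add_cancel, mul_comm (s - 1), mul_assoc]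

theorem Gamma_mul_sub_one_rpow_le_Gamma_add {a x : ℝ} (ha : 0 < a) (hx : 1 < x) :
    Gamma x * (x - 1) ^ a ≤ Gamma (x + a) := by
  have hx1 : 0 < x - 1 := by linarith
  have hΓx : 0 < Gamma x := Gamma_pos_of_pos (by linarith)
  have hslope := convexOn_log_Gamma.slope_mono_adjacent (x := x - 1) (y := x) (z := x + a)
    (mem_Ioi.2 hx1) (mem_Ioi.2 (by linarith)) (by linarith) (by linarith)
  have hlog : log (Gamma x) - log (Gamma (x - 1)) = log (x - 1) := by
    have hrec : Gamma x = (x - 1) * Gamma (x - 1) := by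
      simpa using Gamma_add_one hx1.ne'
    rw [hrec, log_mul hx1.ne' (Gamma_pos_of_pos hx1).ne', add_sub_cancel_right]
  simp only [Function.comp_apply, sub_sub_cancel, div_one, hlog, add_sub_cancel_left,
    le_div_iff₀ ha] at hslope
  rw [← log_le_log_iff (by positivity) (Gamma_pos_of_pos (by linarith)),
    log_mul hΓx.ne' (by positivity), log_rpow hx1]
  linarith

theorem summable_pow_div_Gamma_mul_add (r c : ℝ) {a : ℝ} (ha : 0 < a) :
    Summable fun k : ℕ => r ^ k / Gamma (k * a + c) := by
  have hlin : Tendsto (fun k : ℕ => k * a + c - 1) atTop atTop :=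
    (tendsto_atTop_add_const_right _ (c - 1)
      (tendsto_natCast_atTop_atTop.atTop_mul_const ha)).congr fun k => by ring
  refine summable_of_ratio_norm_eventually_le (r := 1 / 2) (by norm_num) ?_
  filter_upwards [hlin.eventually_gt_atTop 1,
    ((tendsto_rpow_atTop ha).comp hlin).eventually_ge_atTop (2 * |r|)] with k hk hk'
  set x := (k : ℝ) * a + c
  have hx : 1 < x := by linarith
  have hΓ : 0 < Gamma x := Gamma_pos_of_pos (by linarith)
  have hpow : 0 < (x - 1) ^ a := by positivity
  have hsucc : ((k + 1 : ℕ) : ℝ) * a + c = x + a := by push_cast; ring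
  rw [hsucc, norm_div, norm_div, norm_pow, norm_pow, norm_of_nonneg hΓ.le,
    norm_of_nonneg (Gamma_pos_of_pos (by linarith)).le, pow_succ]
  calc |r| ^ k * |r| / Gamma (x + a)
      ≤ |r| ^ k * |r| / (Gamma x * (x - 1) ^ a) :=
        div_le_div_of_nonneg_left (by positivity) (by positivity)
          (Gamma_mul_sub_one_rpow_le_Gamma_add ha hx)
    _ = |r| / (x - 1) ^ a * (|r| ^ k / Gamma x) := by field_simp
    _ ≤ 1 / 2 * (|r| ^ k / Gamma x) := by
        refine mul_le_mul_of_nonneg_right ?_ (by positivity)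
        rw [div_le_iff₀ hpow]
        simp only [Function.comp_apply] at hk'
        linarith

theorem rpow_le_rpow_add_rpow {l u x : ℝ} (p : ℝ) (hl : 0 < l) (hlx : l ≤ x) (hxu : x ≤ u) :
    x ^ p ≤ l ^ p + u ^ p := by
  rcases le_total 0 p with hp | hp
  · exact (rpow_le_rpow (hl.le.trans hlx) hxu hp).trans (le_add_of_nonneg_left (by positivity))
  · exact (rpow_le_rpow_of_nonpos hl hlx hp).trans
      (le_add_of_nonneg_right (rpow_nonneg (hl.le.trans (hlx.trans hxu)) p))
theorem pow_mul_rpow_mul_add_div {x : ℝ} (hx : 0 < x) (lam a s G : ℝ) (k : ℕ) :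
    lam ^ k * (x ^ (k * a + s) / G) = x ^ s * ((lam * x ^ a) ^ k / G) := by
  rw [rpow_add hx, mul_comm (k : ℝ), rpow_mul hx.le, rpow_natCast]
  ring

theorem norm_pow_mul_rpow_mul_add_div_le {l u x : ℝ} (hl : 0 < l) (hlx : l ≤ x) (hxu : x ≤ u)
    (lam s G : ℝ) {a : ℝ} (ha : 0 ≤ a) (k : ℕ) :
    ‖lam ^ k * (x ^ (k * a + s) / G)‖ ≤ (l ^ s + u ^ s) * ‖(|lam| * u ^ a) ^ k / G‖ := by
  have hx : 0 < x := hl.trans_le hlx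
  rw [pow_mul_rpow_mul_add_div hx]
  simp only [norm_mul, norm_div, norm_pow, norm_eq_abs, abs_abs,
    abs_of_nonneg (rpow_nonneg hx.le s), abs_of_nonneg (rpow_nonneg hx.le a),
    abs_of_nonneg (rpow_nonneg (hx.le.trans hxu) a)]
  have hxs := rpow_le_rpow_add_rpow s hl hlx hxu
  gcongr
  exact (rpow_nonneg hx.le s).trans hxs

end Real

theorem rpow_sub_one_mul_mittagLeffler {x : ℝ} (hx : 0 < x) (a c lam : ℝ) :
    x ^ (c - 1) * mittagLeffler a c (lam * x ^ a) =
      ∑' k : ℕ, lam ^ k * (x ^ (k * a + (c - 1)) / Gamma (k * a + c)) := by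
  simp only [pow_mul_rpow_mul_add_div hx, mittagLeffler, tsum_mul_left]

theorem mittagLeffler_hasDerivAt_general (a b lam z : ℝ) (ha : 0 < a) (hz : 0 < z) :
    HasDerivAt (fun x : ℝ => x ^ (b - 1) * mittagLeffler a b (lam * x ^ a))
      (z ^ (b - 2) * mittagLeffler a (b - 1) (lam * z ^ a)) z := by
  have hzt : z ∈ Ioo (z / 2) (2 * z) := ⟨by linarith, by linarith⟩
  have hpos : ∀ x ∈ Ioo (z / 2) (2 * z), 0 < x := fun x hx => (half_pos hz).trans hx.1
  have hseries := hasDerivAt_tsum_of_isPreconnected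
    (g := fun (k : ℕ) x => lam ^ k * (x ^ (k * a + (b - 1)) / Gamma (k * a + b)))
    (g' := fun (k : ℕ) x => lam ^ k * (x ^ (k * a + (b - 1 - 1)) / Gamma (k * a + (b - 1))))
    ((summable_pow_div_Gamma_mul_add (|lam| * (2 * z) ^ a) (b - 1) ha).norm.mul_left
      ((z / 2) ^ (b - 1 - 1) + (2 * z) ^ (b - 1 - 1)))
    isOpen_Ioo (convex_Ioo _ _).isPreconnected
    (fun k x hx => by
      simpa only [add_sub_assoc] using
        (hasDerivAt_rpow_sub_one_div_Gamma (k * a + b) (hpos x hx).ne').const_mul (lam ^ k))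
    (fun k x hx => norm_pow_mul_rpow_mul_add_div_le (half_pos hz) hx.1.le hx.2.le _ _ _ ha.le k)
    hzt
    (by simpa only [pow_mul_rpow_mul_add_div hz] using
      (summable_pow_div_Gamma_mul_add (lam * z ^ a) b ha).mul_left (z ^ (b - 1)))
    hzt
  rw [show b - 2 = b - 1 - 1 by ring, rpow_sub_one_mul_mittagLeffler hz]
  refine hseries.congr_of_eventuallyEq ?_
  filter_upwards [isOpen_Ioo.mem_nhds hzt] with x hx
  exact rpow_sub_one_mul_mittagLeffler (hpos x hx) a b lam

theorem mittagLeffler_hasDerivAt (a b lam z : ℝ) (ha : 0 < a) (hb : 1 < b) (hz : 0 < z) :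
    HasDerivAt (fun x : ℝ => x ^ (b - 1) * mittagLeffler a b (lam * x ^ a))
      (z ^ (b - 2) * mittagLeffler a (b - 1) (lam * z ^ a)) z :=
  mittagLeffler_hasDerivAt_general a b lam z ha hz
end

section
/- Let f be κ-Hölder continuous and g be γ-Hölder continuous on [s,t] with κ + γ > 1. Then the Young integral J_{st}(f dg), defined as the limit of Riemann sums Σ f_{t_i}(g_{t_{i+1}} - g_{t_i}) over partitions with mesh tending to zero, exists and satisfies |J_{st}(f dg)| ≤ ‖f‖_∞ ‖g‖_γ (t-s)^γ + c_{γ,κ} ‖f‖_κ ‖g‖_γ (t-s)^{γ+κ}, where c_{γ,κ} = (2^{γ+κ} - 2)^{-1}. -/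
/-!
Deleting a point `v` with neighbours `u < v < w` from a partition changes the Riemann sum by
`(f v - f u) (g w - g v) = O((w - u)^(κ+γ))`.

Going from dyadic level `k + 1` to level `k` deletes `2^k` midpoints, so consecutive dyadic sums
differ by at most `Kf Kg (t-s)^(κ+γ) 2^(-κ-γ) r^k` with `r = 2^(1-κ-γ) < 1`: they converge, and
summing the geometric series from the one-interval sum `f s (g t - g s)` gives the bound, since
`2^(-κ-γ) / (1 - r) = (2^(κ+γ) - 2)⁻¹`.

For a partition of `[a, b]` into `n` intervals some interior point has its neighbours within
`2 (b - a) / (n - 1)` (Young's argument); deleting such points one at a time shows that the sum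
differs from `f a (g b - g a)` by at most `2^(κ+γ) ζ(κ+γ) Kf Kg (b - a)^(κ+γ)`. Applied on each
interval of a partition of mesh `δ`, this shows that refining it moves the sum by
`O(δ^(κ+γ-1))`; comparing a fine partition and a fine dyadic one with their common refinement
gives convergence to the dyadic limit.
-/

open Set

/-- The Riemann sums `∑ f(tᵢ)(g(tᵢ₊₁) - g(tᵢ))` over partitions of `[s,t]`
converge to `I` as the mesh tends to zero. -/
def RiemannSumsTendTo (f g : ℝ → ℝ) (s t I : ℝ) : Prop :=
  ∀ ε > (0:ℝ), ∃ δ > (0:ℝ), ∀ (n : ℕ) (π : ℕ → ℝ), 0 < n → π 0 = s → π n = t →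
    (∀ i < n, π i < π (i + 1)) → (∀ i < n, π (i + 1) - π i < δ) →
    |(∑ i ∈ Finset.range n, f (π i) * (g (π (i + 1)) - g (π i))) - I| < ε

namespace YoungIntegral

open Finset Filter Topology

lemma monotoneOn_Iic_of_le_succ {α : Type*} [Preorder α] {π : ℕ → α} {n : ℕ}
    (h : ∀ i < n, π i ≤ π (i + 1)) : MonotoneOn π (Set.Iic n) := by
  intro i _ j hj hij
  induction hij with
  | refl => exact le_rfl
  | step _ ih => exact (ih (Nat.le_of_succ_le hj)).trans (h _ hj)

lemma mem_Icc_of_le_succ {π : ℕ → ℝ} {n : ℕ} {s t : ℝ} (hmono : ∀ i < n, π i ≤ π (i + 1))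
    (h0 : π 0 = s) (hn : π n = t) : ∀ i ≤ n, π i ∈ Icc s t := fun i hi =>
  ⟨h0 ▸ monotoneOn_Iic_of_le_succ hmono (Nat.zero_le n) hi (Nat.zero_le i),
    hn ▸ monotoneOn_Iic_of_le_succ hmono hi (le_refl n) hi⟩

lemma sum_range_two_mul {M : Type*} [AddCommMonoid M] (h : ℕ → M) (N : ℕ) :
    ∑ i ∈ range (2 * N), h i = ∑ i ∈ range N, (h (2 * i) + h (2 * i + 1)) := by
  induction N with
  | zero => simp
  | succ N ih =>
    rw [mul_add_one, sum_range_succ, sum_range_succ, sum_range_succ, ih, add_assoc]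

lemma sum_range_eq_sum_sum_Ico {M : Type*} [AddCommMonoid M] (h : ℕ → M) {e : ℕ → ℕ} {n : ℕ}
    (he0 : e 0 = 0) (he : ∀ j < n, e j ≤ e (j + 1)) :
    ∑ k ∈ range (e n), h k = ∑ j ∈ range n, ∑ k ∈ Ico (e j) (e (j + 1)), h k := by
  induction n with
  | zero => simp [he0]
  | succ n ih =>
    rw [sum_range_succ, ← ih fun j hj => he j (by omega),
      sum_range_add_sum_Ico _ (he n (by omega))]

lemma sum_rpow_sub_le {ρ : ℕ → ℝ} {n : ℕ} {θ δ : ℝ} (hθ : 1 ≤ θ)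
    (hmono : ∀ j < n, ρ j ≤ ρ (j + 1)) (hmesh : ∀ j < n, ρ (j + 1) - ρ j ≤ δ) :
    ∑ j ∈ range n, (ρ (j + 1) - ρ j) ^ θ ≤ δ ^ (θ - 1) * (ρ n - ρ 0) := by
  rw [← sum_range_sub, mul_sum]
  refine sum_le_sum fun j hj => ?_
  have hj := mem_range.1 hj
  have hgap : 0 ≤ ρ (j + 1) - ρ j := sub_nonneg.2 (hmono j hj)
  calc (ρ (j + 1) - ρ j) ^ θ = (ρ (j + 1) - ρ j) ^ (θ - 1) * (ρ (j + 1) - ρ j) := by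
        rw [← Real.rpow_add_one' hgap (by linarith), sub_add_cancel]
    _ ≤ δ ^ (θ - 1) * (ρ (j + 1) - ρ j) := by
        gcongr
        exact hmesh j hj

lemma exists_pos_mul_rpow_lt (B : ℝ) {a ε : ℝ} (ha : 0 < a) (hε : 0 < ε) :
    ∃ δ > 0, B * δ ^ a < ε := by
  have h : Tendsto (fun δ : ℝ => B * δ ^ a) (𝓝[>] 0) (𝓝 (B * 0 ^ a)) :=
    ((Real.continuousAt_rpow_const 0 a (Or.inr ha.le)).tendsto.const_mul B).mono_left
      nhdsWithin_le_nhds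
  rw [Real.zero_rpow ha.ne', mul_zero] at h
  obtain ⟨δ, hδε, hδ⟩ := ((h.eventually (gt_mem_nhds hε)).and self_mem_nhdsWithin).exists
  exact ⟨δ, hδ, hδε⟩

def HolderBoundOn (f : ℝ → ℝ) (K α : ℝ) (S : Set ℝ) : Prop :=
  ∀ u ∈ S, ∀ v ∈ S, |f u - f v| ≤ K * |u - v| ^ α

lemma HolderBoundOn.nonneg {f : ℝ → ℝ} {K α : ℝ} {S : Set ℝ} (hf : HolderBoundOn f K α S)
    {u v : ℝ} (hu : u ∈ S) (hv : v ∈ S) (huv : u ≠ v) : 0 ≤ K :=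
  nonneg_of_mul_nonneg_left ((abs_nonneg _).trans (hf u hu v hv))
    (Real.rpow_pos_of_pos (abs_pos.mpr (sub_ne_zero.mpr huv)) α)

variable {f g : ℝ → ℝ} {Kf Kg κ γ : ℝ} {S : Set ℝ}

lemma abs_mul_sub_le_of_holder (hf : HolderBoundOn f Kf κ S) (hg : HolderBoundOn g Kg γ S)
    {u v w : ℝ} (hu : u ∈ S) (hv : v ∈ S) (hw : w ∈ S) :
    |(f v - f u) * (g w - g v)| ≤ Kf * Kg * (|v - u| ^ κ * |w - v| ^ γ) := by
  rw [abs_mul, mul_mul_mul_comm]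
  exact mul_le_mul (hf v hv u hu) (hg w hw v hv) (abs_nonneg _)
    ((abs_nonneg _).trans (hf v hv u hu))

lemma abs_mul_sub_le_of_le (hf : HolderBoundOn f Kf κ S) (hg : HolderBoundOn g Kg γ S)
    (hKf : 0 ≤ Kf) (hKg : 0 ≤ Kg) (hκ : 0 < κ) (hγ : 0 < γ)
    {u v w : ℝ} (hu : u ∈ S) (hv : v ∈ S) (hw : w ∈ S) (huv : u ≤ v) (hvw : v ≤ w) :
    |(f v - f u) * (g w - g v)| ≤ Kf * Kg * (w - u) ^ (κ + γ) := by
  refine (abs_mul_sub_le_of_holder hf hg hu hv hw).trans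
    (mul_le_mul_of_nonneg_left ?_ (by positivity))
  have huw : 0 ≤ w - u := by linarith
  rw [Real.rpow_add' huw (by positivity), abs_of_nonneg (sub_nonneg.2 huv),
    abs_of_nonneg (sub_nonneg.2 hvw)]
  gcongr

def riemannSum (f g : ℝ → ℝ) (π : ℕ → ℝ) (n : ℕ) : ℝ :=
  ∑ i ∈ range n, f (π i) * (g (π (i + 1)) - g (π i))

lemma riemannSum_succ (f g : ℝ → ℝ) (π : ℕ → ℝ) (n : ℕ) :
    riemannSum f g π (n + 1) = riemannSum f g π n + f (π n) * (g (π (n + 1)) - g (π n)) :=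
  sum_range_succ _ _

lemma sum_Ico_eq_riemannSum (f g : ℝ → ℝ) (σ : ℕ → ℝ) (a b : ℕ) :
    ∑ k ∈ Ico a b, f (σ k) * (g (σ (k + 1)) - g (σ k))
      = riemannSum f g (fun k => σ (a + k)) (b - a) := by
  rw [sum_Ico_eq_sum_range, riemannSum]
  simp only [Nat.add_assoc]

def dropPoint (π : ℕ → ℝ) (j : ℕ) (k : ℕ) : ℝ := if k < j then π k else π (k + 1)

lemma dropPoint_le_succ {π : ℕ → ℝ} {n j : ℕ} (h : ∀ i < n + 1, π i ≤ π (i + 1)) :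
    ∀ k < n, dropPoint π j k ≤ dropPoint π j (k + 1) := by
  intro k hk
  unfold dropPoint
  split_ifs
  · exact h k (by omega)
  · exact (h k (by omega)).trans (h (k + 1) (by omega))
  · omega
  · exact h (k + 1) (by omega)

lemma dropPoint_mem {π : ℕ → ℝ} {n j : ℕ} (h : ∀ i ≤ n + 1, π i ∈ S) :
    ∀ k ≤ n, dropPoint π j k ∈ S := by
  intro k hk
  unfold dropPoint
  split_ifs
  · exact h k (by omega)
  · exact h (k + 1) (by omega)

lemma riemannSum_eq_dropPoint_add (f g : ℝ → ℝ) (π : ℕ → ℝ) {i n : ℕ} (hi : i < n) :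
    riemannSum f g π (n + 1) = riemannSum f g (dropPoint π (i + 1)) n
      + (f (π (i + 1)) - f (π i)) * (g (π (i + 2)) - g (π (i + 1))) := by
  induction n, hi using Nat.le_induction with
  | base =>
    have hlow : riemannSum f g (dropPoint π (i + 1)) i = riemannSum f g π i :=
      sum_congr rfl fun k hk => by
        have hk := mem_range.1 hk
        simp only [dropPoint, if_pos (show k < i + 1 by omega),
          if_pos (show k + 1 < i + 1 by omega)]
    rw [riemannSum_succ, riemannSum_succ, riemannSum_succ, hlow]
    simp only [dropPoint, if_pos (show i < i + 1 by omega),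
      if_neg (show ¬ i + 1 < i + 1 by omega)]
    ring
  | succ n _ ih =>
    rw [riemannSum_succ, ih, riemannSum_succ]
    simp only [dropPoint, if_neg (show ¬ n < i + 1 by omega),
      if_neg (show ¬ n + 1 < i + 1 by omega)]
    ring

lemma exists_sub_le_two_mul_div {π : ℕ → ℝ} {m : ℕ} (h : ∀ i < m + 2, π i ≤ π (i + 1)) :
    ∃ i ≤ m, π (i + 2) - π i ≤ 2 * (π (m + 2) - π 0) / (m + 1) := by
  have htel : ∑ i ∈ range (m + 1), (π (i + 2) - π i)
      = (π (m + 2) - π 1) + (π (m + 1) - π 0) := by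
    rw [← sum_range_sub (fun i => π (i + 1)), ← sum_range_sub π, ← sum_add_distrib]
    exact sum_congr rfl fun _ _ => by ring
  have hsum : ∑ i ∈ range (m + 1), (π (i + 2) - π i)
      ≤ ∑ _i ∈ range (m + 1), 2 * (π (m + 2) - π 0) / (m + 1) := by
    have h01 : π 0 ≤ π 1 := h 0 (by omega)
    have h12 : π (m + 1) ≤ π (m + 2) := h (m + 1) (by omega)
    rw [htel, sum_const, card_range, nsmul_eq_mul, Nat.cast_add_one,
      mul_div_cancel₀ _ (by positivity)]
    linarith
  obtain ⟨i, hi, hle⟩ := exists_le_of_sum_le nonempty_range_add_one hsum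
  exact ⟨i, Nat.lt_succ_iff.1 (mem_range.1 hi), hle⟩

theorem abs_riemannSum_sub_le_mul_sum (hf : HolderBoundOn f Kf κ S)
    (hg : HolderBoundOn g Kg γ S) (hKf : 0 ≤ Kf) (hKg : 0 ≤ Kg) (hκ : 0 < κ) (hγ : 0 < γ)
    (n : ℕ) (π : ℕ → ℝ) (hmono : ∀ i < n, π i ≤ π (i + 1)) (hmem : ∀ i ≤ n, π i ∈ S) :
    |riemannSum f g π n - f (π 0) * (g (π n) - g (π 0))|
      ≤ Kf * Kg * (2 * (π n - π 0)) ^ (κ + γ) *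
          ∑ k ∈ range (n - 1), (((k + 1 : ℕ) : ℝ) ^ (κ + γ))⁻¹ := by
  induction n generalizing π with
  | zero => simp [riemannSum]
  | succ n ih =>
    rcases n with _ | m
    · simp [riemannSum]
    obtain ⟨i, hi, hgap⟩ := exists_sub_le_two_mul_div hmono
    have hrest := ih (dropPoint π (i + 1)) (dropPoint_le_succ hmono) (dropPoint_mem hmem)
    simp only [dropPoint, if_pos (show 0 < i + 1 by omega),
      if_neg (show ¬ m + 1 < i + 1 by omega)] at hrest
    have hπ := monotoneOn_Iic_of_le_succ hmono
    have hwidth : 0 ≤ π (m + 2) - π 0 := sub_nonneg.2 (hπ (by simp) (by simp) (by omega))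
    have hcross := abs_mul_sub_le_of_le hf hg hKf hKg hκ hγ (hmem i (by omega))
      (hmem (i + 1) (by omega)) (hmem (i + 2) (by omega)) (hmono i (by omega))
      (hmono (i + 1) (by omega))
    have hgapθ : (π (i + 2) - π i) ^ (κ + γ)
        ≤ (2 * (π (m + 2) - π 0)) ^ (κ + γ) * (((m + 1 : ℕ) : ℝ) ^ (κ + γ))⁻¹ := by
      rw [← div_eq_mul_inv, ← Real.div_rpow (by positivity) (by positivity)]
      exact Real.rpow_le_rpow (sub_nonneg.2 (hπ (by simp; omega) (by simp; omega) (by omega)))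
        (by exact_mod_cast hgap) (by positivity)
    have hlast : |(f (π (i + 1)) - f (π i)) * (g (π (i + 2)) - g (π (i + 1)))|
        ≤ Kf * Kg * (2 * (π (m + 2) - π 0)) ^ (κ + γ) * (((m + 1 : ℕ) : ℝ) ^ (κ + γ))⁻¹ := by
      rw [mul_assoc (Kf * Kg)]
      exact hcross.trans (mul_le_mul_of_nonneg_left hgapθ (by positivity))
    rw [riemannSum_eq_dropPoint_add f g π (show i < m + 1 by omega), add_sub_right_comm]
    refine (abs_add_le _ _).trans ?_
    rw [show m + 1 + 1 - 1 = m + 1 from rfl, sum_range_succ, mul_add]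
    exact add_le_add hrest hlast

noncomputable def youngConst (θ : ℝ) : ℝ := 2 ^ θ * ∑' k : ℕ, (((k + 1 : ℕ) : ℝ) ^ θ)⁻¹

lemma youngConst_nonneg (θ : ℝ) : 0 ≤ youngConst θ :=
  mul_nonneg (by positivity) (tsum_nonneg fun _ => by positivity)

theorem abs_riemannSum_sub_le (hf : HolderBoundOn f Kf κ S) (hg : HolderBoundOn g Kg γ S)
    (hKf : 0 ≤ Kf) (hKg : 0 ≤ Kg) (hκ : 0 < κ) (hγ : 0 < γ) (hκγ : 1 < κ + γ)
    {n : ℕ} {π : ℕ → ℝ} (hmono : ∀ i < n, π i ≤ π (i + 1)) (hmem : ∀ i ≤ n, π i ∈ S) :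
    |riemannSum f g π n - f (π 0) * (g (π n) - g (π 0))|
      ≤ youngConst (κ + γ) * Kf * Kg * (π n - π 0) ^ (κ + γ) := by
  have hsummable : Summable fun k : ℕ => (((k + 1 : ℕ) : ℝ) ^ (κ + γ))⁻¹ :=
    (summable_nat_add_iff 1).2 (Real.summable_nat_rpow_inv.2 hκγ)
  have hwidth : 0 ≤ π n - π 0 :=
    sub_nonneg.2 (monotoneOn_Iic_of_le_succ hmono (by simp) (by simp) (Nat.zero_le n))
  refine (abs_riemannSum_sub_le_mul_sum hf hg hKf hKg hκ hγ n π hmono hmem).trans ?_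
  rw [Real.mul_rpow zero_le_two hwidth, youngConst]
  calc _ ≤ Kf * Kg * (2 ^ (κ + γ) * (π n - π 0) ^ (κ + γ)) *
        ∑' k : ℕ, (((k + 1 : ℕ) : ℝ) ^ (κ + γ))⁻¹ := by
        gcongr
        exact hsummable.sum_le_tsum _ fun _ _ => by positivity
    _ = _ := by ring

theorem abs_riemannSum_sub_riemannSum_le_of_refines (hf : HolderBoundOn f Kf κ S)
    (hg : HolderBoundOn g Kg γ S) (hKf : 0 ≤ Kf) (hKg : 0 ≤ Kg) (hκ : 0 < κ) (hγ : 0 < γ)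
    (hκγ : 1 < κ + γ) {σ ρ : ℕ → ℝ} {p n : ℕ} {e : ℕ → ℕ}
    (hσ : ∀ i < p, σ i ≤ σ (i + 1)) (hσS : ∀ i ≤ p, σ i ∈ S)
    (he0 : e 0 = 0) (hen : e n = p) (he : ∀ j < n, e j ≤ e (j + 1))
    (hρ : ∀ j ≤ n, ρ j = σ (e j)) :
    |riemannSum f g σ p - riemannSum f g ρ n|
      ≤ youngConst (κ + γ) * Kf * Kg * ∑ j ∈ range n, (ρ (j + 1) - ρ j) ^ (κ + γ) := by
  have hep : ∀ j ≤ n, e j ≤ p := fun j hj =>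
    hen ▸ monotoneOn_Iic_of_le_succ he hj (le_refl n) hj
  rw [riemannSum, ← hen, sum_range_eq_sum_sum_Ico _ he0 he, riemannSum, ← sum_sub_distrib,
    mul_sum]
  refine (abs_sum_le_sum_abs _ _).trans (sum_le_sum fun j hj => ?_)
  have hj := mem_range.1 hj
  have hej := he j hj
  have hejp := hep (j + 1) hj
  have hblock := abs_riemannSum_sub_le (n := e (j + 1) - e j) (π := fun k => σ (e j + k))
    hf hg hKf hKg hκ hγ hκγ (fun i hi => hσ _ (by omega)) (fun i hi => hσS _ (by omega))
  simp only [add_zero, Nat.add_sub_cancel' hej, ← hρ j hj.le, ← hρ (j + 1) hj] at hblock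
  rwa [sum_Ico_eq_riemannSum]

section SortedFinset

variable (F : Finset ℝ)

noncomputable def sortedPoint (i : ℕ) : ℝ :=
  if h : i < F.card then F.orderEmbOfFin rfl ⟨i, h⟩ else 0

noncomputable def sortedIndex (x : ℝ) : ℕ :=
  if h : x ∈ F then (F.orderIsoOfFin rfl).symm ⟨x, h⟩ else 0

variable {F}

lemma sortedPoint_eq {i : ℕ} (hi : i < F.card) :
    sortedPoint F i = F.orderEmbOfFin rfl ⟨i, hi⟩ :=
  dif_pos hi

lemma sortedIndex_eq {x : ℝ} (hx : x ∈ F) :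
    sortedIndex F x = (F.orderIsoOfFin rfl).symm ⟨x, hx⟩ :=
  dif_pos hx

lemma sortedIndex_lt_card {x : ℝ} (hx : x ∈ F) : sortedIndex F x < F.card := by
  rw [sortedIndex_eq hx]
  exact Fin.is_lt _

lemma sortedPoint_sortedIndex {x : ℝ} (hx : x ∈ F) : sortedPoint F (sortedIndex F x) = x := by
  rw [sortedPoint_eq (sortedIndex_lt_card hx), ← coe_orderIsoOfFin_apply]
  simp [sortedIndex_eq hx]

lemma sortedIndex_sortedPoint {i : ℕ} (hi : i < F.card) :
    sortedIndex F (sortedPoint F i) = i := by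
  rw [sortedPoint_eq hi, ← coe_orderIsoOfFin_apply, sortedIndex_eq (Subtype.prop _),
    Subtype.coe_eta, OrderIso.symm_apply_apply]

lemma sortedPoint_mem {i : ℕ} (hi : i < F.card) : sortedPoint F i ∈ F := by
  rw [sortedPoint_eq hi]
  exact orderEmbOfFin_mem _ _ _

lemma sortedIndex_mono {x y : ℝ} (hx : x ∈ F) (hy : y ∈ F) (hxy : x ≤ y) :
    sortedIndex F x ≤ sortedIndex F y := by
  rw [sortedIndex_eq hx, sortedIndex_eq hy, ← Fin.le_def]
  exact (F.orderIsoOfFin rfl).symm.monotone (Subtype.mk_le_mk.2 hxy)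

lemma sortedPoint_le_succ : ∀ i < F.card - 1, sortedPoint F i ≤ sortedPoint F (i + 1) := by
  intro i hi
  rw [sortedPoint_eq (by omega), sortedPoint_eq (by omega)]
  exact (F.orderEmbOfFin rfl).monotone (Fin.le_def.2 (Nat.le_succ i))

end SortedFinset

theorem abs_riemannSum_sortedPoint_sub_le (hf : HolderBoundOn f Kf κ S)
    (hg : HolderBoundOn g Kg γ S) (hKf : 0 ≤ Kf) (hKg : 0 ≤ Kg) (hκ : 0 < κ) (hγ : 0 < γ)
    (hκγ : 1 < κ + γ) {F : Finset ℝ} (hFS : ∀ x ∈ F, x ∈ S) {τ : ℕ → ℝ} {q : ℕ}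
    (hτ : ∀ j < q, τ j ≤ τ (j + 1)) (hτF : ∀ j ≤ q, τ j ∈ F)
    (hmin : ∀ x ∈ F, τ 0 ≤ x) (hmax : ∀ x ∈ F, x ≤ τ q) :
    |riemannSum f g (sortedPoint F) (F.card - 1) - riemannSum f g τ q|
      ≤ youngConst (κ + γ) * Kf * Kg * ∑ j ∈ range q, (τ (j + 1) - τ j) ^ (κ + γ) := by
  have hcard : 0 < F.card := card_pos.2 ⟨_, hτF 0 (Nat.zero_le q)⟩
  refine abs_riemannSum_sub_riemannSum_le_of_refines hf hg hKf hKg hκ hγ hκγ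
    (e := fun j => sortedIndex F (τ j)) sortedPoint_le_succ
    (fun i hi => hFS _ (sortedPoint_mem (by omega))) ?_ ?_
    (fun j hj => sortedIndex_mono (hτF j hj.le) (hτF (j + 1) hj) (hτ j hj))
    (fun j hj => (sortedPoint_sortedIndex (hτF j hj)).symm)
  · have h := sortedIndex_mono (hτF 0 (Nat.zero_le q)) (sortedPoint_mem hcard)
      (hmin _ (sortedPoint_mem hcard))
    rw [sortedIndex_sortedPoint hcard] at h
    exact Nat.le_zero.1 h
  · have hlast : F.card - 1 < F.card := by omega
    have h := sortedIndex_mono (sortedPoint_mem hlast) (hτF q le_rfl)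
      (hmax _ (sortedPoint_mem hlast))
    rw [sortedIndex_sortedPoint hlast] at h
    have := sortedIndex_lt_card (hτF q le_rfl)
    omega

theorem abs_riemannSum_sub_riemannSum_le_of_mesh {s t δ : ℝ}
    (hf : HolderBoundOn f Kf κ (Icc s t)) (hg : HolderBoundOn g Kg γ (Icc s t))
    (hKf : 0 ≤ Kf) (hKg : 0 ≤ Kg) (hκ : 0 < κ) (hγ : 0 < γ) (hκγ : 1 < κ + γ)
    {π ρ : ℕ → ℝ} {n m : ℕ}
    (hπ : ∀ i < n, π i ≤ π (i + 1)) (hπ0 : π 0 = s) (hπn : π n = t)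
    (hπδ : ∀ i < n, π (i + 1) - π i ≤ δ)
    (hρ : ∀ i < m, ρ i ≤ ρ (i + 1)) (hρ0 : ρ 0 = s) (hρm : ρ m = t)
    (hρδ : ∀ i < m, ρ (i + 1) - ρ i ≤ δ) :
    |riemannSum f g π n - riemannSum f g ρ m|
      ≤ 2 * youngConst (κ + γ) * Kf * Kg * δ ^ (κ + γ - 1) * (t - s) := by
  set F := (range (n + 1)).image π ∪ (range (m + 1)).image ρ
  have hπF : ∀ i ≤ n, π i ∈ F := fun i hi =>
    mem_union_left _ (mem_image_of_mem π (mem_range.2 (Nat.lt_succ_of_le hi)))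
  have hρF : ∀ i ≤ m, ρ i ∈ F := fun i hi =>
    mem_union_right _ (mem_image_of_mem ρ (mem_range.2 (Nat.lt_succ_of_le hi)))
  have hFI : ∀ x ∈ F, x ∈ Icc s t := by
    intro x hx
    rcases mem_union.1 hx with hx | hx <;> obtain ⟨i, hi, rfl⟩ := mem_image.1 hx
    · exact mem_Icc_of_le_succ hπ hπ0 hπn i (Nat.lt_succ_iff.1 (mem_range.1 hi))
    · exact mem_Icc_of_le_succ hρ hρ0 hρm i (Nat.lt_succ_iff.1 (mem_range.1 hi))
  have hcomp : ∀ {τ : ℕ → ℝ} {q : ℕ}, (∀ i < q, τ i ≤ τ (i + 1)) → τ 0 = s → τ q = t →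
      (∀ i ≤ q, τ i ∈ F) → (∀ i < q, τ (i + 1) - τ i ≤ δ) →
      |riemannSum f g (sortedPoint F) (F.card - 1) - riemannSum f g τ q|
        ≤ youngConst (κ + γ) * Kf * Kg * (δ ^ (κ + γ - 1) * (t - s)) := by
    intro τ q hτ hτ0 hτq hτF hτδ
    refine (abs_riemannSum_sortedPoint_sub_le hf hg hKf hKg hκ hγ hκγ hFI hτ hτF
      (hτ0 ▸ fun x hx => (hFI x hx).1) (hτq ▸ fun x hx => (hFI x hx).2)).trans ?_
    have := youngConst_nonneg (κ + γ)
    gcongr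
    exact hτ0 ▸ hτq ▸ sum_rpow_sub_le hκγ.le hτ hτδ
  have hπσ := hcomp hπ hπ0 hπn hπF hπδ
  have hρσ := hcomp hρ hρ0 hρm hρF hρδ
  rw [abs_sub_comm] at hπσ
  linarith [abs_sub_le (riemannSum f g π n) (riemannSum f g (sortedPoint F) (F.card - 1))
    (riemannSum f g ρ m)]

noncomputable def dyadicPoint (s t : ℝ) (k i : ℕ) : ℝ := s + (t - s) * i / 2 ^ k

section Dyadic

variable {s t : ℝ}

lemma dyadicPoint_zero (k : ℕ) : dyadicPoint s t k 0 = s := by simp [dyadicPoint]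

lemma dyadicPoint_two_pow (k : ℕ) : dyadicPoint s t k (2 ^ k) = t := by simp [dyadicPoint]

lemma dyadicPoint_succ_sub (k i : ℕ) :
    dyadicPoint s t k (i + 1) - dyadicPoint s t k i = (t - s) / 2 ^ k := by
  simp only [dyadicPoint]
  push_cast
  ring

lemma dyadicPoint_two_mul (k i : ℕ) :
    dyadicPoint s t (k + 1) (2 * i) = dyadicPoint s t k i := by
  simp only [dyadicPoint]
  push_cast
  field_simp
  ring

lemma dyadicPoint_le_succ (hst : s ≤ t) (k i : ℕ) :
    dyadicPoint s t k i ≤ dyadicPoint s t k (i + 1) :=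
  sub_nonneg.1 (dyadicPoint_succ_sub k i ▸ div_nonneg (sub_nonneg.2 hst) (by positivity))

lemma dyadicPoint_mem (hst : s ≤ t) (k : ℕ) : ∀ i ≤ 2 ^ k, dyadicPoint s t k i ∈ Icc s t :=
  mem_Icc_of_le_succ (fun i _ => dyadicPoint_le_succ hst k i) (dyadicPoint_zero k)
    (dyadicPoint_two_pow k)

theorem abs_riemannSum_dyadicPoint_succ_sub_le (hst : s < t)
    (hf : HolderBoundOn f Kf κ (Icc s t)) (hg : HolderBoundOn g Kg γ (Icc s t)) (k : ℕ) :
    |riemannSum f g (dyadicPoint s t (k + 1)) (2 ^ (k + 1))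
        - riemannSum f g (dyadicPoint s t k) (2 ^ k)|
      ≤ 2 ^ k * (Kf * Kg * ((t - s) / 2 ^ (k + 1)) ^ (κ + γ)) := by
  have hD := dyadicPoint_mem hst.le (k + 1)
  have hh : 0 < (t - s) / 2 ^ (k + 1) := div_pos (sub_pos.2 hst) (by positivity)
  rw [riemannSum, pow_succ', sum_range_two_mul, riemannSum, ← sum_sub_distrib]
  refine ((abs_sum_le_sum_abs _ _).trans
    (sum_le_sum (g := fun _ => Kf * Kg * ((t - s) / 2 ^ (k + 1)) ^ (κ + γ)) fun i hi => ?_)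
    ).trans_eq (by rw [sum_const, card_range, nsmul_eq_mul]; push_cast; ring)
  have hi : 2 * i + 2 ≤ 2 ^ (k + 1) := by rw [pow_succ']; have := mem_range.1 hi; omega
  have hcross := abs_mul_sub_le_of_holder hf hg (hD (2 * i) (by omega))
    (hD (2 * i + 1) (by omega)) (hD (2 * i + 1 + 1) hi)
  rw [dyadicPoint_succ_sub, dyadicPoint_succ_sub, abs_of_pos hh, ← Real.rpow_add hh] at hcross
  rw [← dyadicPoint_two_mul k i, ← dyadicPoint_two_mul k (i + 1),
    show 2 * (i + 1) = 2 * i + 1 + 1 by ring]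
  exact (congrArg abs (by ring)).trans_le hcross

theorem exists_tendsto_riemannSum_dyadicPoint (hst : s < t)
    (hf : HolderBoundOn f Kf κ (Icc s t)) (hg : HolderBoundOn g Kg γ (Icc s t))
    (hκγ : 1 < κ + γ) :
    ∃ I, Tendsto (fun k => riemannSum f g (dyadicPoint s t k) (2 ^ k)) atTop (𝓝 I) ∧
      |f s * (g t - g s) - I| ≤ (2 ^ (κ + γ) - 2)⁻¹ * Kf * Kg * (t - s) ^ (κ + γ) := by
  have htwo : 2 < (2 : ℝ) ^ (κ + γ) := by
    simpa using Real.rpow_lt_rpow_of_exponent_lt one_lt_two hκγ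
  have hr : 2 / 2 ^ (κ + γ) < (1 : ℝ) := (div_lt_one (by positivity)).2 htwo
  have hstep : ∀ k, dist (riemannSum f g (dyadicPoint s t k) (2 ^ k))
      (riemannSum f g (dyadicPoint s t (k + 1)) (2 ^ (k + 1)))
        ≤ Kf * Kg * (t - s) ^ (κ + γ) / 2 ^ (κ + γ) * (2 / 2 ^ (κ + γ)) ^ k := by
    intro k
    rw [dist_comm, Real.dist_eq]
    refine (abs_riemannSum_dyadicPoint_succ_sub_le hst hf hg k).trans_eq ?_
    rw [Real.div_rpow (sub_pos.2 hst).le (by positivity), ← Real.rpow_pow_comm zero_le_two,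
      div_pow, pow_succ]
    field_simp
  obtain ⟨I, hI⟩ := cauchySeq_tendsto_of_complete (cauchySeq_of_le_geometric _ _ hr hstep)
  refine ⟨I, hI, ?_⟩
  have hdist := dist_le_of_le_geometric_of_tendsto₀ _ _ hr hstep hI
  have hS0 : riemannSum f g (dyadicPoint s t 0) (2 ^ 0) = f s * (g t - g s) := by
    simp [riemannSum, dyadicPoint]
  rw [hS0, Real.dist_eq] at hdist
  refine hdist.trans_eq ?_
  field_simp

theorem riemannSumsTendTo_of_tendsto_dyadicPoint (hst : s < t)
    (hf : HolderBoundOn f Kf κ (Icc s t)) (hg : HolderBoundOn g Kg γ (Icc s t))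
    (hKf : 0 ≤ Kf) (hKg : 0 ≤ Kg) (hκ : 0 < κ) (hγ : 0 < γ) (hκγ : 1 < κ + γ) {I : ℝ}
    (hI : Tendsto (fun k => riemannSum f g (dyadicPoint s t k) (2 ^ k)) atTop (𝓝 I)) :
    RiemannSumsTendTo f g s t I := by
  intro ε hε
  obtain ⟨δ, hδ, hδε⟩ := exists_pos_mul_rpow_lt (2 * youngConst (κ + γ) * Kf * Kg * (t - s))
    (sub_pos.2 hκγ) hε
  refine ⟨δ, hδ, fun n π _ hπ0 hπn hπ hmesh => ?_⟩
  have hfine : ∀ᶠ k : ℕ in atTop, (t - s) / 2 ^ k ≤ δ :=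
    (tendsto_const_nhds.div_atTop (tendsto_pow_atTop_atTop_of_one_lt one_lt_two)).eventually
      (ge_mem_nhds hδ)
  have hbound : |riemannSum f g π n - I|
      ≤ 2 * youngConst (κ + γ) * Kf * Kg * δ ^ (κ + γ - 1) * (t - s) :=
    le_of_tendsto (tendsto_const_nhds.sub hI).abs (hfine.mono fun k hk =>
      abs_riemannSum_sub_riemannSum_le_of_mesh hf hg hKf hKg hκ hγ hκγ
        (fun i hi => (hπ i hi).le) hπ0 hπn (fun i hi => (hmesh i hi).le)
        (fun i _ => dyadicPoint_le_succ hst.le k i) (dyadicPoint_zero k)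
        (dyadicPoint_two_pow k) (fun i _ => (dyadicPoint_succ_sub k i).trans_le hk))
  exact hbound.trans_lt (by linarith)

end Dyadic

end YoungIntegral

open YoungIntegral in
theorem young_integral_exists_and_bound
    (s t κ γ : ℝ) (hst : s < t) (hκ : κ ∈ Set.Ioo (0:ℝ) 1) (hγ : γ ∈ Set.Ioo (0:ℝ) 1)
    (hκγ : 1 < κ + γ)
    (f g : ℝ → ℝ) (Cf Kf Kg : ℝ)
    (hCf : ∀ u ∈ Set.Icc s t, |f u| ≤ Cf)
    (hKf : ∀ u ∈ Set.Icc s t, ∀ v ∈ Set.Icc s t, |f u - f v| ≤ Kf * |u - v| ^ κ)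
    (hKg : ∀ u ∈ Set.Icc s t, ∀ v ∈ Set.Icc s t, |g u - g v| ≤ Kg * |u - v| ^ γ) :
    ∃ I : ℝ, RiemannSumsTendTo f g s t I ∧
      |I| ≤ Cf * Kg * (t - s) ^ γ + (2 ^ (γ + κ) - 2)⁻¹ * Kf * Kg * (t - s) ^ (γ + κ) := by
  have hs : s ∈ Icc s t := left_mem_Icc.2 hst.le
  have ht : t ∈ Icc s t := right_mem_Icc.2 hst.le
  have hKf0 : 0 ≤ Kf := HolderBoundOn.nonneg hKf hs ht hst.ne
  have hKg0 : 0 ≤ Kg := HolderBoundOn.nonneg hKg hs ht hst.ne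
  obtain ⟨I, hI, hIs⟩ := exists_tendsto_riemannSum_dyadicPoint hst hKf hKg hκγ
  refine ⟨I, riemannSumsTendTo_of_tendsto_dyadicPoint hst hKf hKg hKf0 hKg0 hκ.1 hγ.1 hκγ hI, ?_⟩
  have hgts : |g t - g s| ≤ Kg * (t - s) ^ γ := by
    simpa only [abs_of_pos (sub_pos.2 hst)] using hKg t ht s hs
  have hfirst : |f s * (g t - g s)| ≤ Cf * Kg * (t - s) ^ γ := by
    rw [abs_mul, mul_assoc]
    exact mul_le_mul (hCf s hs) hgts (abs_nonneg _) ((abs_nonneg _).trans (hCf s hs))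
  rw [add_comm γ κ]
  linarith [abs_sub_abs_le_abs_sub I (f s * (g t - g s)), abs_sub_comm I (f s * (g t - g s))]
end

section
/- Let β ∈ (0,1), A < 0, and let h : ℝ → ℝ satisfy |h(x)| ≤ C|x| for all |x| < δ₀ with A + C < 0 (hypothesis (H2)). If 0 < x₀ < δ₀ and X is a continuous solution of X(t) = x₀ + (1/Γ(β)) ∫_0^t (t-s)^{β-1} [A X(s) + h(X(s))] ds on [0,∞), then X(t) > 0 for all t ≥ 0. -/
/-!
Let `T` be the first time `X` leaves `(0, δ₀)`. Before `T` the forcing `g = A X + h(X)` satisfies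
`g ≤ 0`, so `X T ≤ x₀ < δ₀` and hence `X T ≤ 0`. On the other hand, let `τ` be a point where `X`
is maximal on `[T - ε, T]`. Since the kernel `(t - s)^(β - 1)` decreases in `t` and `g ≤ 0`,
`X τ - X T` is at most the contribution of `[τ, T]` to the integral at time `T`, which is
`O(ε^β) · X τ` because `-g ≤ (|A| + |C|) X`. For small `ε` this forces `X τ ≤ 0`, contradicting
the positivity of `X` before `T`.
-/

open Set Filter Topology MeasureTheory intervalIntegral

theorem exists_first_exit {α : Type*} [TopologicalSpace α] {X : ℝ → α} {U : Set α} {a b : ℝ}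
    (hU : IsOpen U) (hab : a ≤ b) (hX : ContinuousOn X (Icc a b)) (hb : X b ∉ U) :
    ∃ T ∈ Icc a b, X T ∉ U ∧ ∀ t ∈ Ico a T, X t ∈ U := by
  set S := Icc a b ∩ X ⁻¹' Uᶜ
  have hS : IsClosed S := hX.preimage_isClosed_of_isClosed isClosed_Icc hU.isClosed_compl
  have hSbdd : BddBelow S := ⟨a, fun t ht => ht.1.1⟩
  obtain ⟨hT, hTU⟩ := hS.csInf_mem ⟨b, right_mem_Icc.2 hab, hb⟩ hSbdd
  refine ⟨sInf S, hT, hTU, fun t ht => ?_⟩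
  by_contra htU
  exact (csInf_le hSbdd ⟨⟨ht.1, ht.2.le.trans hT.2⟩, htU⟩).not_gt ht.2

theorem mul_add_nonpos_of_abs_le {A C x y : ℝ} (hAC : A + C ≤ 0) (hx : 0 ≤ x)
    (hy : |y| ≤ C * x) : A * x + y ≤ 0 := by
  nlinarith [le_abs_self y, mul_nonpos_of_nonpos_of_nonneg hAC hx]

theorem neg_mul_add_le_of_abs_le {A C x y : ℝ} (hx : 0 ≤ x) (hy : |y| ≤ C * x) :
    -(A * x + y) ≤ (|A| + |C|) * x := by
  nlinarith [neg_abs_le A, le_abs_self C, neg_abs_le y]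

theorem exists_mem_Ioo_mul_rpow_sub_lt_one {β T : ℝ} (hβ : 0 < β) (hT : 0 < T) (a : ℝ) :
    ∃ t ∈ Ioo 0 T, a * (T - t) ^ β < 1 := by
  have hlim : Tendsto (fun t => a * (T - t) ^ β) (𝓝[<] T) (𝓝 0) := by
    have hcont : Continuous fun t => a * (T - t) ^ β :=
      continuous_const.mul ((continuous_const.sub continuous_id).rpow_const fun _ => Or.inr hβ.le)
    simpa [Real.zero_rpow hβ.ne'] using hcont.continuousWithinAt.tendsto (x := T) (s := Iio T)
  obtain ⟨t, hlt, ht⟩ :=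
    ((hlim.eventually (gt_mem_nhds one_pos)).and (Ioo_mem_nhdsLT hT)).exists
  exact ⟨t, ht, hlt⟩

section RiemannLiouvilleKernel

variable {β : ℝ} {g : ℝ → ℝ}

theorem intervalIntegrable_sub_rpow (hβ : 0 < β) (t a b : ℝ) :
    IntervalIntegrable (fun s => (t - s) ^ (β - 1)) volume a b := by
  simpa using
    (intervalIntegrable_rpow' (a := t - a) (b := t - b) (by linarith : -1 < β - 1)).comp_sub_left t

theorem integral_sub_rpow (hβ : 0 < β) (τ t : ℝ) :
    ∫ s in τ..t, (t - s) ^ (β - 1) = (t - τ) ^ β / β := by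
  rw [integral_comp_sub_left (fun u => u ^ (β - 1)), sub_self,
    integral_rpow (Or.inl (by linarith)), sub_add_cancel, Real.zero_rpow hβ.ne', sub_zero]

theorem aestronglyMeasurable_of_intervalIntegrable_sub_rpow_mul {T : ℝ} (hT : 0 ≤ T)
    (hint : IntervalIntegrable (fun s => (T - s) ^ (β - 1) * g s) volume 0 T) :
    AEStronglyMeasurable g (volume.restrict (Ioo 0 T)) := by
  rw [intervalIntegrable_iff_integrableOn_Ioo_of_le hT] at hint
  have hkernel : Measurable fun s : ℝ => (T - s) ^ (β - 1) := by fun_prop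
  refine ((hkernel.inv.aestronglyMeasurable).mul hint.aestronglyMeasurable).congr ?_
  filter_upwards [ae_restrict_mem measurableSet_Ioo] with s hs
  have : (T - s) ^ (β - 1) ≠ 0 := (Real.rpow_pos_of_pos (sub_pos.2 hs.2) _).ne'
  simp only [Pi.mul_apply, Pi.inv_apply]
  field_simp

theorem intervalIntegrable_sub_rpow_mul {T B a b : ℝ} (hβ : 0 < β)
    (hg : AEStronglyMeasurable g (volume.restrict (Ioo 0 T))) (hgB : ∀ s ∈ Ioo 0 T, |g s| ≤ B)
    (ha : 0 ≤ a) (hab : a ≤ b) (hbT : b ≤ T) (t : ℝ) :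
    IntervalIntegrable (fun s => (t - s) ^ (β - 1) * g s) volume a b := by
  have hsub : Ioo a b ⊆ Ioo 0 T := Ioo_subset_Ioo ha hbT
  rw [intervalIntegrable_iff_integrableOn_Ioo_of_le hab]
  refine Integrable.mul_bdd (c := B) ?_ (hg.mono_measure (Measure.restrict_mono hsub le_rfl)) ?_
  · exact (intervalIntegrable_iff_integrableOn_Ioo_of_le hab).1
      (intervalIntegrable_sub_rpow hβ t a b)
  · filter_upwards [ae_restrict_mem measurableSet_Ioo] with s hs using hgB s (hsub hs)

theorem integral_sub_rpow_mul_nonpos {T : ℝ} (hT : 0 ≤ T) (hg : ∀ s ∈ Ioo 0 T, g s ≤ 0) :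
    ∫ s in 0..T, (T - s) ^ (β - 1) * g s ≤ 0 := by
  rw [← neg_nonneg, ← intervalIntegral.integral_neg]
  refine integral_nonneg_of_ae_restrict hT ?_
  rw [← Measure.restrict_congr_set Ioo_ae_eq_Icc]
  filter_upwards [ae_restrict_mem measurableSet_Ioo] with s hs
  have := Real.rpow_nonneg (sub_nonneg.2 hs.2.le) (β - 1)
  simp only [Pi.zero_apply]
  nlinarith [hg s hs]

theorem integral_sub_rpow_mul_sub_le {τ T B : ℝ} (hβ0 : 0 < β) (hβ1 : β ≤ 1)
    (hτ : 0 ≤ τ) (hτT : τ ≤ T)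
    (hgτ : IntervalIntegrable (fun s => (τ - s) ^ (β - 1) * g s) volume 0 τ)
    (hgT : IntervalIntegrable (fun s => (T - s) ^ (β - 1) * g s) volume 0 T)
    (hg_nonpos : ∀ s ∈ Ioo 0 τ, g s ≤ 0) (hgB : ∀ s ∈ Ioo τ T, -g s ≤ B) :
    (∫ s in 0..τ, (τ - s) ^ (β - 1) * g s) - ∫ s in 0..T, (T - s) ^ (β - 1) * g s ≤
      B * ((T - τ) ^ β / β) := by
  have hgT₁ : IntervalIntegrable (fun s => (T - s) ^ (β - 1) * g s) volume 0 τ :=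
    hgT.mono_set (uIcc_subset_uIcc_left (by simp [uIcc_of_le (hτ.trans hτT), hτ, hτT]))
  have hgT₂ : IntervalIntegrable (fun s => (T - s) ^ (β - 1) * g s) volume τ T :=
    hgT.mono_set (uIcc_subset_uIcc_right (by simp [uIcc_of_le (hτ.trans hτT), hτ, hτT]))
  have hkernel : (∫ s in 0..τ, (τ - s) ^ (β - 1) * g s) ≤
      ∫ s in 0..τ, (T - s) ^ (β - 1) * g s := by
    refine integral_mono_on_of_le_Ioo hτ hgτ hgT₁ fun s hs => ?_
    have : (T - s) ^ (β - 1) ≤ (τ - s) ^ (β - 1) :=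
      Real.rpow_le_rpow_of_nonpos (sub_pos.2 hs.2) (by linarith) (by linarith)
    exact mul_le_mul_of_nonpos_right this (hg_nonpos s hs)
  have htail : -∫ s in τ..T, (T - s) ^ (β - 1) * g s ≤ B * ((T - τ) ^ β / β) := by
    rw [← integral_sub_rpow hβ0, ← intervalIntegral.integral_const_mul,
      ← intervalIntegral.integral_neg]
    refine integral_mono_on_of_le_Ioo hτT hgT₂.neg
      ((intervalIntegrable_sub_rpow hβ0 T τ T).const_mul B) fun s hs => ?_
    have := Real.rpow_nonneg (sub_nonneg.2 hs.2.le) (β - 1)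
    nlinarith [hgB s hs]
  rw [← integral_add_adjacent_intervals hgT₁ hgT₂]
  linarith

end RiemannLiouvilleKernel

theorem pos_of_eq_add_mul_integral_sub_rpow_mul {β c K x₀ T : ℝ} {X g : ℝ → ℝ}
    (hβ0 : 0 < β) (hβ1 : β ≤ 1) (hc : 0 ≤ c) (hK : 0 ≤ K) (hT : 0 < T)
    (hX : ContinuousOn X (Icc 0 T)) (hXpos : ∀ t ∈ Ico 0 T, 0 < X t)
    (hg_nonpos : ∀ s ∈ Ico 0 T, g s ≤ 0) (hgX : ∀ s ∈ Ico 0 T, -g s ≤ K * X s)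
    (hint : IntervalIntegrable (fun s => (T - s) ^ (β - 1) * g s) volume 0 T)
    (heq : ∀ t ∈ Icc 0 T, X t = x₀ + c * ∫ s in 0..t, (t - s) ^ (β - 1) * g s) :
    0 < X T := by
  by_contra! hXT
  obtain ⟨R, hR⟩ := isCompact_Icc.exists_bound_of_continuousOn hX
  have hgR : ∀ s ∈ Ioo 0 T, |g s| ≤ K * R := fun s hs => by
    have hs' : s ∈ Ico 0 T := Ioo_subset_Ico_self hs
    rw [abs_of_nonpos (hg_nonpos s hs')]
    exact (hgX s hs').trans (mul_le_mul_of_nonneg_left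
      ((le_abs_self _).trans (hR s (Ico_subset_Icc_self hs'))) hK)
  have hII {a b : ℝ} (ha : 0 ≤ a) (hab : a ≤ b) (hbT : b ≤ T) (t : ℝ) :=
    intervalIntegrable_sub_rpow_mul hβ0
      (aestronglyMeasurable_of_intervalIntegrable_sub_rpow_mul hT.le hint) hgR ha hab hbT t
  obtain ⟨t', ht', hsmall⟩ := exists_mem_Ioo_mul_rpow_sub_lt_one hβ0 hT (c * K / β)
  obtain ⟨τ, hτ, hτmax⟩ := isCompact_Icc.exists_isMaxOn (nonempty_Icc.2 ht'.2.le)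
    (hX.mono (Icc_subset_Icc_left ht'.1.le))
  have hM : 0 < X τ :=
    (hXpos t' ⟨ht'.1.le, ht'.2⟩).trans_le (hτmax (left_mem_Icc.2 ht'.2.le))
  have hτ0 : 0 ≤ τ := ht'.1.le.trans hτ.1
  have hτT : τ < T := hτ.2.lt_of_ne (by rintro rfl; linarith)
  have hdiff := integral_sub_rpow_mul_sub_le (B := K * X τ) hβ0 hβ1 hτ0 hτ.2
    (hII le_rfl hτ0 hτ.2 τ) (hII le_rfl hT.le le_rfl T)
    (fun s hs => hg_nonpos s ⟨hs.1.le, hs.2.trans hτT⟩)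
    (fun s hs => (hgX s ⟨hτ0.trans hs.1.le, hs.2⟩).trans
      (mul_le_mul_of_nonneg_left (hτmax ⟨hτ.1.trans hs.1.le, hs.2.le⟩) hK))
  have hpow : (T - τ) ^ β ≤ (T - t') ^ β :=
    Real.rpow_le_rpow (by linarith) (by linarith [hτ.1]) hβ0.le
  have hgrowth : X τ ≤ c * K / β * (T - t') ^ β * X τ := calc
    X τ ≤ X τ - X T := by linarith
    _ = c * ((∫ s in 0..τ, (τ - s) ^ (β - 1) * g s) -
          ∫ s in 0..T, (T - s) ^ (β - 1) * g s) := by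
      rw [heq τ ⟨hτ0, hτT.le⟩, heq T ⟨hT.le, le_rfl⟩]; ring
    _ ≤ c * (K * X τ * ((T - τ) ^ β / β)) := mul_le_mul_of_nonneg_left hdiff hc
    _ ≤ c * K / β * (T - t') ^ β * X τ := by
      rw [show c * (K * X τ * ((T - τ) ^ β / β)) = c * K / β * (T - τ) ^ β * X τ by ring]
      gcongr
  nlinarith

theorem solution_positive_general
    (β A C δ₀ x₀ : ℝ) (hβ : β ∈ Set.Ioo (0:ℝ) 1)
    (hAC : A + C < 0)
    (h : ℝ → ℝ) (hh : ∀ x : ℝ, |x| < δ₀ → |h x| ≤ C * |x|)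
    (hx₀ : 0 < x₀) (hx₀' : x₀ < δ₀)
    (X : ℝ → ℝ) (hX : ContinuousOn X (Set.Ici 0))
    (heq : ∀ t ∈ Set.Ici (0:ℝ),
      X t = x₀ + (1 / Real.Gamma β) *
        ∫ s in (0:ℝ)..t, (t - s) ^ (β - 1) * (A * X s + h (X s))) :
    ∀ t ∈ Set.Ici (0:ℝ), 0 < X t := by
  intro t₁ ht₁
  by_contra! hXt₁
  obtain ⟨T, ⟨hT0, -⟩, hXT, hXU⟩ := exists_first_exit isOpen_Ioo ht₁
    (hX.mono Icc_subset_Ici_self) (fun hmem : X t₁ ∈ Ioo 0 δ₀ => hXt₁.not_gt hmem.1)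
  have hX0 : X 0 = x₀ := by simpa using heq 0 self_mem_Ici
  have hT : 0 < T := hT0.lt_of_ne (by rintro rfl; exact hXT (hX0 ▸ ⟨hx₀, hx₀'⟩))
  have hhX : ∀ s ∈ Ico 0 T, |h (X s)| ≤ C * X s := fun s hs => by
    obtain ⟨hpos, hlt⟩ := hXU s hs
    simpa [abs_of_pos hpos] using hh _ ((abs_of_pos hpos).trans_lt hlt)
  have hg_nonpos : ∀ s ∈ Ico 0 T, A * X s + h (X s) ≤ 0 := fun s hs =>
    mul_add_nonpos_of_abs_le hAC.le (hXU s hs).1.le (hhX s hs)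
  have hΓ : 0 < 1 / Real.Gamma β := one_div_pos.2 (Real.Gamma_pos_of_pos hβ.1)
  have hXT_le : X T ≤ x₀ := by
    have := integral_sub_rpow_mul_nonpos (β := β) hT0 fun s hs =>
      hg_nonpos s (Ioo_subset_Ico_self hs)
    rw [heq T hT0]
    nlinarith
  have hXT_nonpos : X T ≤ 0 := not_lt.1 fun hpos => hXT ⟨hpos, hXT_le.trans_lt hx₀'⟩
  by_cases hint :
      IntervalIntegrable (fun s => (T - s) ^ (β - 1) * (A * X s + h (X s))) volume 0 T
  · exact hXT_nonpos.not_gt (pos_of_eq_add_mul_integral_sub_rpow_mul hβ.1 hβ.2.le hΓ.le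
      (by positivity) hT (hX.mono Icc_subset_Ici_self) (fun t ht => (hXU t ht).1) hg_nonpos
      (fun s hs => neg_mul_add_le_of_abs_le (hXU s hs).1.le (hhX s hs)) hint
      fun t ht => heq t ht.1)
  · have hXT_eq : X T = x₀ := by simpa [integral_undef hint] using heq T hT0
    linarith

theorem solution_positive
    (β A C δ₀ x₀ : ℝ) (hβ : β ∈ Set.Ioo (0:ℝ) 1) (hA : A < 0)
    (hC : 0 < C) (hAC : A + C < 0) (hδ₀ : 0 < δ₀)
    (h : ℝ → ℝ) (hh : ∀ x : ℝ, |x| < δ₀ → |h x| ≤ C * |x|)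
    (hx₀ : 0 < x₀) (hx₀' : x₀ < δ₀)
    (X : ℝ → ℝ) (hX : ContinuousOn X (Set.Ici 0))
    (heq : ∀ t ∈ Set.Ici (0:ℝ),
      X t = x₀ + (1 / Real.Gamma β) *
        ∫ s in (0:ℝ)..t, (t - s) ^ (β - 1) * (A * X s + h (X s))) :
    ∀ t ∈ Set.Ici (0:ℝ), 0 < X t :=
  solution_positive_general β A C δ₀ x₀ hβ hAC h hh hx₀ hx₀' X hX heq
end
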